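/- arXiv:1905.08563 — 4 statements merged into one kernel-verified Lean document; each statement's English description precedes it below -/
import Mathlib

section
/- Let c > 1 and f : ℕ → ℕ with f(n) = o(log log n). Then for all sufficiently large n, for every function A : Fin(⌈n^c⌉) × ({0,1}^{f(n)})³ → {0,1}^{f(n)}, there exist n distinct identifiers i₁, ..., iₙ in [1, n^c] such that the functions A(i₁, ·), ..., A(iₙ, ·) are all equal. -/
open Filter Asymptotics

/-- The key counting fact: eventually `2 ^ (f n * 8 ^ f n) * n ≤ ⌈n ^ c⌉₊`. -/
theorem eventually_count_le (c : ℝ) (hc : 1 < c) (f : ℕ → ℕ)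
    (hf : (fun n => (f n : ℝ)) =o[atTop] (fun n => Real.log (Real.log n))) :
    ∀ᶠ n : ℕ in atTop, 2 ^ (f n * 8 ^ f n) * n ≤ ⌈(n : ℝ) ^ c⌉₊ := by
  have hc' : (0 : ℝ) < c - 1 := by linarith
  have h2 : (fun n : ℕ => Real.log (Real.log n)) =o[atTop]
      (fun n : ℕ => (Real.log n) ^ ((1 : ℝ) / 2)) :=
    (isLittleO_log_rpow_atTop (by norm_num : (0:ℝ) < 1/2)).comp_tendsto
      (Real.tendsto_log_atTop.comp tendsto_natCast_atTop_atTop)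
  have hb2 := h2.bound hc'
  have hb1 := hf.bound (by norm_num : (0:ℝ) < 1/6)
  filter_upwards [hb1, hb2, eventually_ge_atTop 3] with n h1 h2 hn3
  -- basic positivity facts
  have hn3R : (3 : ℝ) ≤ (n : ℝ) := by exact_mod_cast hn3
  have hnpos : (0 : ℝ) < n := by linarith
  have hL : 1 ≤ Real.log n := by
    rw [Real.le_log_iff_exp_le hnpos]
    have := Real.exp_one_lt_d9
    linarith
  have hLpos : (0 : ℝ) < Real.log n := by linarith
  have hLL : 0 ≤ Real.log (Real.log n) := Real.log_nonneg hL
  have hhalf : (0 : ℝ) ≤ (Real.log n) ^ ((1:ℝ)/2) := Real.rpow_nonneg hLpos.le _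
  simp only [Real.norm_eq_abs] at h1 h2
  rw [abs_of_nonneg (Nat.cast_nonneg _), abs_of_nonneg hLL] at h1
  rw [abs_of_nonneg hLL, abs_of_nonneg hhalf] at h2
  set LL := Real.log (Real.log n) with hLLdef
  set S := (Real.log n) ^ ((1:ℝ)/2) with hSdef
  -- log 8 ≤ 3
  have hlog8 : Real.log 8 ≤ 3 := by
    rw [Real.log_le_iff_le_exp (by norm_num)]
    have h := Real.exp_one_gt_d9
    calc (8:ℝ) ≤ 2.7182818283 ^ (3:ℕ) := by norm_num
      _ ≤ Real.exp 1 ^ (3:ℕ) := by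
          apply pow_le_pow_left₀ (by norm_num) h.le
      _ = Real.exp 3 := by rw [Real.exp_one_pow]; norm_num
  -- (8:ℝ) ^ f n ≤ S
  have h8 : (8 : ℝ) ^ f n ≤ S := by
    have he : (8 : ℝ) ^ f n = Real.exp ((f n : ℝ) * Real.log 8) := by
      rw [← Real.rpow_natCast 8 (f n), Real.rpow_def_of_pos (by norm_num), mul_comm]
    rw [he, hSdef, Real.rpow_def_of_pos hLpos]
    apply Real.exp_le_exp.2
    have hf8 : (f n : ℝ) * Real.log 8 ≤ (1/6 * LL) * 3 :=
      mul_le_mul h1 hlog8 (Real.log_nonneg (by norm_num)) (by positivity)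
    nlinarith
  have h8nn : (0:ℝ) ≤ (8:ℝ) ^ f n := by positivity
  have hSS : S * S = Real.log n := by
    rw [hSdef, ← Real.rpow_add hLpos]
    norm_num
  have hlog2 : Real.log 2 ≤ 1 := by
    have := Real.log_two_lt_d9; linarith
  have hlog2nn : (0:ℝ) ≤ Real.log 2 := Real.log_nonneg (by norm_num)
  -- the key inequality
  have key : (f n : ℝ) * 8 ^ f n * Real.log 2 ≤ (c - 1) * Real.log n := by
    have p1 : (f n : ℝ) * 8 ^ f n ≤ (1/6 * LL) * S :=
      mul_le_mul h1 h8 h8nn (by positivity)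
    have p2 : LL * S ≤ ((c-1) * S) * S := mul_le_mul_of_nonneg_right h2 hhalf
    have hfn : (0:ℝ) ≤ (f n : ℝ) := Nat.cast_nonneg _
    calc (f n : ℝ) * 8 ^ f n * Real.log 2
        ≤ (f n : ℝ) * 8 ^ f n * 1 := by
          apply mul_le_mul_of_nonneg_left hlog2 (by positivity)
      _ = (f n : ℝ) * 8 ^ f n := mul_one _
      _ ≤ (1/6 * LL) * S := p1
      _ ≤ LL * S := by nlinarith
      _ ≤ ((c-1) * S) * S := p2
      _ = (c - 1) * Real.log n := by rw [mul_assoc, hSS]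
  -- convert to the natural-number statement
  have hreal : ((2 ^ (f n * 8 ^ f n) * n : ℕ) : ℝ) ≤ (n : ℝ) ^ c := by
    push_cast
    have he2 : (2 : ℝ) ^ (f n * 8 ^ f n) =
        Real.exp (((f n * 8 ^ f n : ℕ) : ℝ) * Real.log 2) := by
      rw [← Real.rpow_natCast 2 (f n * 8 ^ f n), Real.rpow_def_of_pos (by norm_num),
        mul_comm]
    have hcast : ((f n * 8 ^ f n : ℕ) : ℝ) = (f n : ℝ) * 8 ^ f n := by push_cast; ring
    have hstep : (2 : ℝ) ^ (f n * 8 ^ f n) ≤ (n : ℝ) ^ (c - 1) := by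
      rw [he2, hcast, Real.rpow_def_of_pos hnpos]
      exact Real.exp_le_exp.2 (by linarith [key])
    calc (2 : ℝ) ^ (f n * 8 ^ f n) * n ≤ (n : ℝ) ^ (c - 1) * n := by
          apply mul_le_mul_of_nonneg_right hstep hnpos.le
      _ = (n : ℝ) ^ (c - 1) * (n : ℝ) ^ (1 : ℝ) := by rw [Real.rpow_one]
      _ = (n : ℝ) ^ c := by rw [← Real.rpow_add hnpos]; ring_nf
  have := hreal.trans (Nat.le_ceil ((n : ℝ) ^ c))
  exact_mod_cast this

/-- If f(n) = o(log log n) then for all large n, every ID-based algorithm with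
identifiers in [1, n^c] and f(n)-bit states admits n distinct identifiers on
which its specific algorithms are all equal. -/
theorem exists_anonymous_ids (c : ℝ) (hc : 1 < c) (f : ℕ → ℕ)
    (hf : (fun n => (f n : ℝ)) =o[atTop] (fun n => Real.log (Real.log n))) :
    ∀ᶠ n : ℕ in atTop,
      ∀ A : Fin ⌈(n : ℝ) ^ c⌉₊ →
          ((Fin (f n) → Bool) × (Fin (f n) → Bool) × (Fin (f n) → Bool)) →
          (Fin (f n) → Bool),
        ∃ S : Finset (Fin ⌈(n : ℝ) ^ c⌉₊),
          S.card = n ∧ ∀ i ∈ S, ∀ j ∈ S, A i = A j := by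
  filter_upwards [eventually_count_le c hc f hf] with n hcount A
  -- cardinality of the codomain of A
  have hcardT : Fintype.card
      (((Fin (f n) → Bool) × (Fin (f n) → Bool) × (Fin (f n) → Bool)) → (Fin (f n) → Bool))
      = 2 ^ (f n * 8 ^ f n) := by
    simp only [Fintype.card_fun, Fintype.card_prod, Fintype.card_fin, Fintype.card_bool]
    rw [← pow_mul]
    congr 1
    have : (8 : ℕ) ^ f n = 2 ^ f n * (2 ^ f n * 2 ^ f n) := by
      rw [show (8:ℕ) = 2 * (2 * 2) by norm_num, mul_pow, mul_pow]
    rw [this]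
  have hmaps : ∀ a ∈ (Finset.univ : Finset (Fin ⌈(n : ℝ) ^ c⌉₊)), A a ∈
      (Finset.univ : Finset (((Fin (f n) → Bool) × (Fin (f n) → Bool) × (Fin (f n) → Bool)) →
        (Fin (f n) → Bool))) := fun a _ => Finset.mem_univ _
  have hcards : (Finset.univ : Finset (((Fin (f n) → Bool) × (Fin (f n) → Bool) ×
      (Fin (f n) → Bool)) → (Fin (f n) → Bool))).card * n
      ≤ (Finset.univ : Finset (Fin ⌈(n : ℝ) ^ c⌉₊)).card := by
    rw [Finset.card_univ, Finset.card_univ, hcardT, Fintype.card_fin]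
    exact hcount
  obtain ⟨b, -, hb⟩ := Finset.exists_le_card_fiber_of_mul_le_card_of_maps_to
    hmaps Finset.univ_nonempty hcards
  obtain ⟨S, hSsub, hScard⟩ := Finset.exists_subset_card_eq hb
  refine ⟨S, hScard, fun i hi j hj => ?_⟩
  have hi' := Finset.mem_filter.1 (hSsub hi)
  have hj' := Finset.mem_filter.1 (hSsub hj)
  rw [hi'.2, hj'.2]
end

section
/- Main theorem (contrapositive form): Let c > 1. Suppose f : ℕ → ℕ and for each n there is an algorithm A_n : [n^c] × ({0,1}^{f(n)})³ → {0,1}^{f(n)} such that for every n ≥ 2 and every injective identifier assignment id : Z/nZ → [n^c], the synchronous execution of A_n starting from any configuration eventually reaches and remains in configurations that are non-constant. Then f(n) is not o(log log n); i.e., f(n) = Ω(log log n) along some subsequence. -/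
open Filter Asymptotics

/-- From a small value of `f n`, get enough identifiers with identical
transition functions. Key numeric lemma is inlined in the main proof. -/
theorem main_aux_exp_bound (n K : ℕ) (hn : 2 ≤ n) (c : ℝ)
    (h : (K : ℝ) * Real.log 2 ≤ (c - 1) * Real.log n) :
    n * 2 ^ K ≤ ⌈(n : ℝ) ^ c⌉₊ := by
  have hn0 : (0 : ℝ) < n := by positivity
  have h2K : ((2 : ℝ)) ^ K ≤ (n : ℝ) ^ (c - 1) := by
    rw [Real.rpow_def_of_pos hn0]
    calc ((2:ℝ)) ^ K = Real.exp ((K : ℝ) * Real.log 2) := by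
          rw [← Real.log_pow, Real.exp_log (by positivity)]
      _ ≤ Real.exp ((c - 1) * Real.log n) := Real.exp_le_exp.2 h
      _ = Real.exp (Real.log n * (c - 1)) := by ring_nf
  have key : ((n * 2 ^ K : ℕ) : ℝ) ≤ (n : ℝ) ^ c := by
    push_cast
    calc (n : ℝ) * (2:ℝ) ^ K ≤ (n : ℝ) * (n : ℝ) ^ (c - 1) := by
          exact mul_le_mul_of_nonneg_left h2K (le_of_lt hn0)
      _ = (n : ℝ) ^ (1 : ℝ) * (n : ℝ) ^ (c - 1) := by rw [Real.rpow_one]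
      _ = (n : ℝ) ^ c := by rw [← Real.rpow_add hn0]; ring_nf
  have := key.trans (Nat.le_ceil ((n : ℝ) ^ c))
  exact_mod_cast this

/-- Main theorem, contrapositive form: if for each n the algorithm A_n, run
synchronously on the n-ring with any injective identifier assignment from
[1, n^c], eventually reaches and remains in non-constant configurations from
every initial configuration, then f(n) is not o(log log n). -/
theorem main_lower_bound (c : ℝ) (hc : 1 < c) (f : ℕ → ℕ)
    (A : ∀ n : ℕ, Fin ⌈(n : ℝ) ^ c⌉₊ →
        ((Fin (f n) → Bool) × (Fin (f n) → Bool) × (Fin (f n) → Bool)) →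
        (Fin (f n) → Bool))
    (hsolve : ∀ n : ℕ, 2 ≤ n →
      ∀ id : ZMod n → Fin ⌈(n : ℝ) ^ c⌉₊, Function.Injective id →
        ∀ γ₀ : ZMod n → (Fin (f n) → Bool),
          ∃ T : ℕ, ∀ t, T ≤ t →
            ¬ ∃ s, ∀ k,
              ((fun γ k => A n (id k) (γ k, γ (k - 1), γ (k + 1)))^[t] γ₀) k = s) :
    ¬ ((fun n => (f n : ℝ)) =o[atTop] (fun n => Real.log (Real.log n))) := by
  intro h
  have hlog2 : (0 : ℝ) < Real.log 2 := Real.log_pos (by norm_num)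
  set ε : ℝ := min (1 / (6 * Real.log 2)) ((c - 1) / (2 * Real.log 2)) with hε_def
  have hε : 0 < ε := lt_min (by positivity) (by
    apply div_pos (by linarith) (by positivity))
  -- find a suitable n
  obtain ⟨n, hfn, hn3⟩ := ((h.bound hε).and (eventually_ge_atTop 3)).exists
  simp only [Real.norm_natCast, Real.norm_eq_abs] at hfn
  have hn2 : 2 ≤ n := by omega
  set F := f n with hF_def
  set P := Real.log n with hP_def
  have hP1 : 1 ≤ P := by
    rw [hP_def, Real.le_log_iff_exp_le (by positivity)]
    calc Real.exp 1 ≤ 2.7182818286 := le_of_lt Real.exp_one_lt_d9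
      _ ≤ (n : ℝ) := by
        have : (3 : ℝ) ≤ (n : ℝ) := by exact_mod_cast hn3
        linarith
  set L := Real.log P with hL_def
  have hL0 : 0 ≤ L := Real.log_nonneg hP1
  have habs : |L| = L := abs_of_nonneg hL0
  rw [habs] at hfn
  have hfεL : (F : ℝ) ≤ ε * L := (le_abs_self _).trans hfn
  -- Q = exp (L/2), Q^2 = P
  set Q := Real.exp (L / 2) with hQ_def
  have hQ0 : 0 < Q := Real.exp_pos _
  have hQ2 : Q ^ 2 = P := by
    rw [hQ_def, sq, ← Real.exp_add, show L / 2 + L / 2 = L by ring, hL_def,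
      Real.exp_log (by linarith)]
  -- 8^F ≤ Q
  have h8F : ((8 : ℝ)) ^ F ≤ Q := by
    have hlog8 : Real.log 8 = 3 * Real.log 2 := by
      rw [show (8:ℝ) = 2 ^ 3 by norm_num, Real.log_pow]; push_cast; ring
    have : ((8 : ℝ)) ^ F = Real.exp ((F : ℝ) * Real.log 8) := by
      rw [← Real.log_pow, Real.exp_log (by positivity)]
    rw [this, hQ_def]
    apply Real.exp_le_exp.2
    have hε1 : ε ≤ 1 / (6 * Real.log 2) := min_le_left _ _
    calc (F : ℝ) * Real.log 8 ≤ (ε * L) * (3 * Real.log 2) := by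
          rw [hlog8]
          apply mul_le_mul_of_nonneg_right hfεL (by positivity)
      _ ≤ (1 / (6 * Real.log 2) * L) * (3 * Real.log 2) := by
          apply mul_le_mul_of_nonneg_right _ (by positivity)
          exact mul_le_mul_of_nonneg_right hε1 hL0
      _ = L / 2 := by field_simp; ring
  -- L ≤ 2 * Q
  have hLQ : L ≤ 2 * Q := by
    have h1 : L / 2 ≤ Q := by
      have := Real.add_one_le_exp (L / 2)
      rw [← hQ_def] at this
      linarith
    linarith
  -- main numeric inequality
  have hKey : ((F * 8 ^ F : ℕ) : ℝ) * Real.log 2 ≤ (c - 1) * P := by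
    push_cast
    have hε2 : ε ≤ (c - 1) / (2 * Real.log 2) := min_le_right _ _
    have h2e : 2 * ε * Real.log 2 ≤ c - 1 := by
      rw [le_div_iff₀ (by positivity : (0:ℝ) < 2 * Real.log 2)] at hε2
      nlinarith
    calc (F : ℝ) * (8:ℝ) ^ F * Real.log 2
        ≤ (ε * L) * Q * Real.log 2 := by
          apply mul_le_mul_of_nonneg_right _ (le_of_lt hlog2)
          apply mul_le_mul hfεL h8F (by positivity) (by nlinarith)
      _ ≤ (ε * (2 * Q)) * Q * Real.log 2 := by
          apply mul_le_mul_of_nonneg_right _ (le_of_lt hlog2)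
          apply mul_le_mul_of_nonneg_right _ (le_of_lt hQ0)
          exact mul_le_mul_of_nonneg_left hLQ (le_of_lt hε)
      _ = (2 * ε * Real.log 2) * Q ^ 2 := by ring
      _ ≤ (c - 1) * P := by
          rw [hQ2]
          apply mul_le_mul_of_nonneg_right h2e (by linarith)
  set K := F * 8 ^ F with hK_def
  have hcard : n * 2 ^ K ≤ ⌈(n : ℝ) ^ c⌉₊ := main_aux_exp_bound n K hn2 c hKey
  -- pigeonhole
  have hcardβ : Fintype.card (((Fin F → Bool) × (Fin F → Bool) ×
      (Fin F → Bool)) → (Fin F → Bool)) = 2 ^ K := by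
    rw [hK_def]
    simp only [Fintype.card_fun, Fintype.card_prod, Fintype.card_bool,
      Fintype.card_fin, ← pow_mul]
    congr 1
    have : (2:ℕ) ^ F * (2 ^ F * 2 ^ F) = 8 ^ F := by
      rw [← pow_add, ← pow_add, show F + (F + F) = 3 * F by ring, pow_mul]
      norm_num
    rw [this]
  have hpig : Fintype.card (((Fin F → Bool) × (Fin F → Bool) ×
      (Fin F → Bool)) → (Fin F → Bool)) * (n - 1) <
      Fintype.card (Fin ⌈(n : ℝ) ^ c⌉₊) := by
    rw [Fintype.card_fin, hcardβ]
    have h2 : (0:ℕ) < 2 ^ K := by positivity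
    calc 2 ^ K * (n - 1) < 2 ^ K * n := (mul_lt_mul_iff_right₀ h2).2 (by omega)
      _ = n * 2 ^ K := by ring
      _ ≤ ⌈(n : ℝ) ^ c⌉₊ := hcard
  obtain ⟨y, hy⟩ := Fintype.exists_lt_card_fiber_of_mul_lt_card (f := A n) hpig
  have hy' : n ≤ (Finset.univ.filter fun x => A n x = y).card := by omega
  obtain ⟨t, hts, htcard⟩ := Finset.exists_subset_card_eq hy'
  haveI : NeZero n := ⟨by omega⟩
  have hcardt : Fintype.card (ZMod n) = Fintype.card t := by
    rw [ZMod.card, Fintype.card_coe, htcard]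
  let e : ZMod n ≃ t := Fintype.equivOfCardEq hcardt
  set id : ZMod n → Fin ⌈(n : ℝ) ^ c⌉₊ := fun k => (e k : Fin ⌈(n : ℝ) ^ c⌉₊)
    with hid_def
  have hinj : Function.Injective id :=
    Subtype.val_injective.comp e.injective
  have hsame : ∀ k, A n (id k) = y := by
    intro k
    have := hts (e k).2
    simpa using (Finset.mem_filter.1 this).2
  -- homogeneous initial configuration stays homogeneous
  set γ₀ : ZMod n → (Fin F → Bool) := fun _ _ => false with hγ₀_def
  obtain ⟨T, hT⟩ := hsolve n hn2 id hinj γ₀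
  apply hT T (le_refl T)
  clear hT
  -- prove by induction that the iterate is always constant
  have key : ∀ t : ℕ, ∃ s, ∀ k,
      ((fun γ k => A n (id k) (γ k, γ (k - 1), γ (k + 1)))^[t] γ₀) k = s := by
    intro t
    induction t with
    | zero => exact ⟨fun _ => false, fun _ => rfl⟩
    | succ t ih =>
      obtain ⟨s, hs⟩ := ih
      refine ⟨y (s, s, s), fun k => ?_⟩
      rw [Function.iterate_succ_apply']
      show A n (id k) _ = _
      simp only [hs]
      rw [hsame]
  exact key T
end

section
/- Combined impossibility for d-regular graphs: let d be constant, c > 1, f(n) = o(log log n). For all large n and every algorithm A : [n^c] × ({0,1}^{f(n)})^{d+1} → {0,1}^{f(n)}, there exist n distinct identifiers on which all specific algorithms coincide; hence on any d-regular n-node graph with those identifiers, starting from a constant configuration, the synchronous execution stays constant forever. -/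
open Filter Asymptotics

/-!
A local algorithm with identifier `i` is a map `({0,1}^f)^(d+1) → {0,1}^f`, and there are
only `2^(f·2^((d+1)f))` of them. Since `f = o(log log n)`, this count is at most `n^(c-1)` for
large `n`, so by pigeonhole some `n` of the `⌈n^c⌉` identifiers carry the same algorithm. On
nodes with these identifiers the synchronous update is the same local rule everywhere, and a
homogeneous rule maps a constant configuration to a constant configuration.
-/

lemma mul_two_pow_mul_le_two_pow_succ_mul (a k : ℕ) : k * 2 ^ (a * k) ≤ 2 ^ ((a + 1) * k) :=
  calc k * 2 ^ (a * k) ≤ 2 ^ k * 2 ^ (a * k) := Nat.mul_le_mul_right _ Nat.lt_two_pow_self.le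
    _ = 2 ^ ((a + 1) * k) := by rw [← pow_add]; ring_nf

lemma card_local_rule (d k : ℕ) :
    Fintype.card ((Fin (d + 1) → (Fin k → Bool)) → (Fin k → Bool)) =
      2 ^ (k * 2 ^ ((d + 1) * k)) := by
  simp only [Fintype.card_fun, Fintype.card_bool, Fintype.card_fin, ← pow_mul]
  ring_nf

lemma exists_card_eq_forall_apply_eq {α β : Type*} [Fintype α] [Fintype β] [Nonempty β]
    (g : α → β) {n : ℕ} (hn : Fintype.card β * n ≤ Fintype.card α) :
    ∃ y : β, ∃ S : Finset α, S.card = n ∧ ∀ i ∈ S, g i = y := by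
  classical
  obtain ⟨y, hy⟩ := Fintype.exists_le_card_fiber_of_mul_le_card g hn
  obtain ⟨S, hSy, hS⟩ := Finset.exists_subset_card_eq hy
  exact ⟨y, S, hS, fun i hi => (Finset.mem_filter.1 (hSy hi)).2⟩

lemma eventually_two_pow_mul_le_sqrt_log {f : ℕ → ℕ}
    (hf : (fun n => (f n : ℝ)) =o[atTop] (fun n => Real.log (Real.log n))) (K : ℕ) :
    ∀ᶠ n : ℕ in atTop, (2 : ℝ) ^ (K * f n) ≤ √(Real.log n) := by
  have hlog : Tendsto (fun n : ℕ => Real.log n) atTop atTop :=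
    Real.tendsto_log_atTop.comp tendsto_natCast_atTop_atTop
  filter_upwards [(hf.const_mul_left (K * Real.log 2)).def (by norm_num : (0 : ℝ) < 1 / 2),
    hlog.eventually_ge_atTop 1] with n hfn hL
  have hloglog : 0 ≤ Real.log (Real.log n) := Real.log_nonneg hL
  rw [Real.norm_of_nonneg (by positivity), Real.norm_of_nonneg hloglog] at hfn
  rw [← Real.log_le_log_iff (by positivity) (Real.sqrt_pos.2 (by linarith)), Real.log_pow,
    Real.log_sqrt (by linarith)]
  push_cast
  linarith

lemma eventually_two_pow_two_pow_le_rpow {ε : ℝ} (hε : 0 < ε) :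
    ∀ᶠ n : ℕ in atTop, ∀ m : ℕ,
      (2 : ℝ) ^ m ≤ √(Real.log n) → (2 : ℝ) ^ 2 ^ m ≤ (n : ℝ) ^ ε := by
  have hlog : Tendsto (fun n : ℕ => Real.log n) atTop atTop :=
    Real.tendsto_log_atTop.comp tendsto_natCast_atTop_atTop
  filter_upwards [hlog.eventually_ge_atTop ((Real.log 2 / ε) ^ 2), eventually_gt_atTop 0]
    with n hL hn m hm
  have hL0 : 0 ≤ Real.log n := le_trans (sq_nonneg _) hL
  have hlog2 : Real.log 2 ≤ ε * √(Real.log n) := by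
    rw [← div_le_iff₀' hε]
    exact Real.le_sqrt_of_sq_le hL
  have hsq : √(Real.log n) * √(Real.log n) = Real.log n := Real.mul_self_sqrt hL0
  have hpos : (0 : ℝ) < n := by exact_mod_cast hn
  rw [← Real.log_le_log_iff (by positivity) (by positivity), Real.log_pow, Real.log_rpow hpos]
  push_cast
  nlinarith [Real.log_pos (by norm_num : (1 : ℝ) < 2), Real.sqrt_nonneg (Real.log n)]

lemma eventually_mul_card_local_rule_le_ceil_rpow (d : ℕ) {c : ℝ} (hc : 1 < c) {f : ℕ → ℕ}
    (hf : (fun n => (f n : ℝ)) =o[atTop] (fun n => Real.log (Real.log n))) :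
    ∀ᶠ n : ℕ in atTop, n * 2 ^ (f n * 2 ^ ((d + 1) * f n)) ≤ ⌈(n : ℝ) ^ c⌉₊ := by
  filter_upwards [eventually_two_pow_mul_le_sqrt_log hf (d + 2),
    eventually_two_pow_two_pow_le_rpow (sub_pos.2 hc), eventually_gt_atTop 0] with n hsqrt hpow hn
  have hpos : (0 : ℝ) < n := by exact_mod_cast hn
  have hcount : (2 : ℝ) ^ (f n * 2 ^ ((d + 1) * f n)) ≤ (n : ℝ) ^ (c - 1) :=
    (pow_le_pow_right₀ one_le_two (mul_two_pow_mul_le_two_pow_succ_mul (d + 1) (f n))).trans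
      (hpow _ hsqrt)
  have hreal : (n : ℝ) * 2 ^ (f n * 2 ^ ((d + 1) * f n)) ≤ ⌈(n : ℝ) ^ c⌉₊ :=
    calc (n : ℝ) * 2 ^ (f n * 2 ^ ((d + 1) * f n)) ≤ n * (n : ℝ) ^ (c - 1) := by gcongr
      _ = (n : ℝ) ^ c := by rw [← Real.rpow_one_add' hpos.le (by linarith)]; ring_nf
      _ ≤ ⌈(n : ℝ) ^ c⌉₊ := Nat.le_ceil _
  exact_mod_cast hreal

lemma iterate_homogeneous_rule_const {V σ : Type*} {d : ℕ} (B : (Fin (d + 1) → σ) → σ)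
    (nb : V → Fin d → V) (s₀ : σ) (t : ℕ) :
    (fun (γ : V → σ) v => B (Fin.cons (γ v) fun j => γ (nb v j)))^[t] (fun _ => s₀) =
      fun _ => (fun s => B (Fin.cons s fun _ => s))^[t] s₀ :=
  (Function.Semiconj.iterate_right (f := Function.const V) (fun _ => rfl) t s₀).symm

/-- Combined impossibility for d-regular graphs: for constant d, c > 1 and
f(n) = o(log log n), for all large n every algorithm A admits n distinct
identifiers with identical specific algorithms; hence on any d-regular n-node
graph whose (injective) identifiers are taken among those, the synchronous
execution started from a constant configuration stays constant forever. -/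
theorem regular_impossibility (d : ℕ) (c : ℝ) (hc : 1 < c) (f : ℕ → ℕ)
    (hf : (fun n => (f n : ℝ)) =o[atTop] (fun n => Real.log (Real.log n))) :
    ∀ᶠ n : ℕ in atTop,
      ∀ A : Fin ⌈(n : ℝ) ^ c⌉₊ →
          (Fin (d + 1) → (Fin (f n) → Bool)) → (Fin (f n) → Bool),
        ∃ S : Finset (Fin ⌈(n : ℝ) ^ c⌉₊),
          S.card = n ∧ (∀ i ∈ S, ∀ j ∈ S, A i = A j) ∧
          ∀ (V : Type) (_ : Fintype V) (_ : DecidableEq V)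
            (G : SimpleGraph V) (_ : DecidableRel G.Adj),
            Fintype.card V = n → (∀ v : V, G.degree v = d) →
            ∀ id : V → Fin ⌈(n : ℝ) ^ c⌉₊, Function.Injective id →
              (∀ v, id v ∈ S) →
              ∀ nb : V → Fin d → V, (∀ v j, G.Adj v (nb v j)) →
                ∀ s₀ : Fin (f n) → Bool, ∀ t : ℕ,
                  ∃ s, ∀ v,
                    ((fun γ v => A (id v)
                        (Fin.cons (γ v) (fun j => γ (nb v j))))^[t]
                      (fun _ => s₀)) v = s := by
  filter_upwards [eventually_mul_card_local_rule_le_ceil_rpow d hc hf] with n hn A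
  obtain ⟨B, S, hS, hAS⟩ := exists_card_eq_forall_apply_eq A
    (by rwa [card_local_rule, Fintype.card_fin, mul_comm])
  refine ⟨S, hS, fun i hi j hj => (hAS i hi).trans (hAS j hj).symm, ?_⟩
  intro V _ _ G _ _ _ id _ hid nb _ s₀ t
  have hrule : (fun (γ : V → Fin (f n) → Bool) v =>
      A (id v) (Fin.cons (γ v) fun j => γ (nb v j))) =
        fun γ v => B (Fin.cons (γ v) fun j => γ (nb v j)) := by
    funext γ v
    rw [hAS _ (hid v)]
  exact ⟨_, fun v => by rw [hrule, iterate_homogeneous_rule_const]⟩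
end

section
/- Lower bound statement: if for every n ≥ 2 there exists an ID-based deterministic algorithm with f(n)-bit registers that, on the n-ring with any injective ID assignment from [n^c] (c > 1 fixed), solves some non-homogeneous problem under the synchronous (distributed) scheduler from every initial configuration, then there exists a constant K > 0 and infinitely many n with f(n) ≥ K · log log n. -/
open Filter Function Real

/-! With `f` bits per register there are `(2 ^ f) ^ (2 ^ f) ^ 3` local rules, so if
`⌈n ^ c⌉ > (2 ^ f) ^ (2 ^ f) ^ 3 * (n - 1)` the pigeonhole principle gives `n` distinct IDs
running the same rule. With these IDs on the ring, the synchronous execution from a constant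
configuration stays constant forever and never becomes legal. Hence `n ^ (c - 1) ≤ 2 ^ 2 ^ (4 f)`,
and taking logarithms twice gives `log (c - 1) + log (log n) ≤ 4 f log 2`. -/

theorem exists_injective_forall_eq_of_mul_lt_card {ι β κ : Type*} [Fintype ι] [Fintype β]
    [Fintype κ] (A : ι → β) (h : Fintype.card β * (Fintype.card κ - 1) < Fintype.card ι) :
    ∃ id : κ → ι, Injective id ∧ ∃ δ, ∀ k, A (id k) = δ := by
  classical
  obtain ⟨δ, hδ⟩ := Fintype.exists_lt_card_fiber_of_mul_lt_card A h
  have hcard : Fintype.card κ ≤ Fintype.card {x // A x = δ} := by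
    rw [Fintype.card_subtype]; omega
  obtain ⟨e⟩ := Function.Embedding.nonempty_of_card_le hcard
  exact ⟨fun k => e k, Subtype.val_injective.comp e.injective, δ, fun k => (e k).2⟩

section Ring

variable {n : ℕ} {I S : Type*}

def ringStep (A : I → S × S × S → S) (id : ZMod n → I) (γ : ZMod n → S) : ZMod n → S :=
  fun k => A (id k) (γ k, γ (k - 1), γ (k + 1))

theorem mapsTo_range_const_ringStep {A : I → S × S × S → S} {id : ZMod n → I} {δ : S × S × S → S}
    (h : ∀ k, A (id k) = δ) :
    Set.MapsTo (ringStep A id) (Set.range (const (ZMod n))) (Set.range (const (ZMod n))) := by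
  rintro _ ⟨s, rfl⟩
  exact ⟨δ (s, s, s), funext fun k => by simp [ringStep, h]⟩

theorem card_le_of_solves_nonhomogeneous [NeZero n] [Fintype I] [Fintype S] [Nonempty S]
    (A : I → S × S × S → S) (legal : Set (ZMod n → S))
    (hlegal : ∀ γ ∈ legal, ¬ ∃ s, ∀ k, γ k = s)
    (hsolve : ∀ id : ZMod n → I, Injective id → ∀ γ₀ : ZMod n → S,
      ∃ T : ℕ, ∀ t, T ≤ t → (ringStep A id)^[t] γ₀ ∈ legal) :
    Fintype.card I ≤ Fintype.card S ^ Fintype.card S ^ 3 * (n - 1) := by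
  classical
  by_contra! hlt
  have hcard : Fintype.card (S × S × S → S) = Fintype.card S ^ Fintype.card S ^ 3 := by
    simp only [Fintype.card_fun, Fintype.card_prod]; ring
  obtain ⟨id, hid, δ, hδ⟩ := exists_injective_forall_eq_of_mul_lt_card (κ := ZMod n) A
    (by rwa [hcard, ZMod.card])
  obtain ⟨s₀⟩ := ‹Nonempty S›
  obtain ⟨T, hT⟩ := hsolve id hid (const _ s₀)
  obtain ⟨s, hs⟩ := (mapsTo_range_const_ringStep hδ).iterate T ⟨s₀, rfl⟩
  exact hlegal _ (hT T le_rfl) ⟨s, fun k => by rw [← hs]; rfl⟩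

end Ring

theorem two_pow_pow_two_pow_pow_le (m : ℕ) : (2 ^ m) ^ (2 ^ m) ^ 3 ≤ 2 ^ 2 ^ (4 * m) :=
  calc (2 ^ m) ^ (2 ^ m) ^ 3 ≤ (2 ^ 2 ^ m) ^ (2 ^ m) ^ 3 :=
        Nat.pow_le_pow_left (Nat.pow_le_pow_right two_pos Nat.lt_two_pow_self.le) _
    _ = 2 ^ 2 ^ (4 * m) := by rw [← pow_mul, ← pow_mul, ← pow_add]; ring_nf

theorem rpow_sub_one_le_of_ceil_rpow_le {n B : ℕ} {c : ℝ} (hn : 0 < n)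
    (h : ⌈(n : ℝ) ^ c⌉₊ ≤ B * (n - 1)) : (n : ℝ) ^ (c - 1) ≤ B := by
  have hn' : (0 : ℝ) < n := by exact_mod_cast hn
  rw [rpow_sub_one hn'.ne', div_le_iff₀ hn']
  calc (n : ℝ) ^ c ≤ ⌈(n : ℝ) ^ c⌉₊ := Nat.le_ceil _
    _ ≤ (B * (n - 1) : ℕ) := by exact_mod_cast h
    _ ≤ B * n := by push_cast; gcongr; exact_mod_cast Nat.sub_le n 1

theorem log_add_log_log_le_of_rpow_le {x ε : ℝ} {m : ℕ} (hx : 1 < x) (hε : 0 < ε)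
    (h : x ^ ε ≤ 2 ^ 2 ^ m) : log ε + log (log x) ≤ m * log 2 := by
  have hlogx : 0 < log x := log_pos hx
  have hlog2 : 0 < log 2 := log_pos one_lt_two
  have h₁ : ε * log x ≤ 2 ^ m * log 2 := by
    simpa [log_rpow (by linarith : 0 < x), log_pow] using
      log_le_log (rpow_pos_of_pos (by linarith) ε) h
  have h₂ := log_le_log (by positivity) h₁
  rw [log_mul hε.ne' hlogx.ne', log_mul (by positivity) hlog2.ne', log_pow] at h₂
  have : log (log 2) < 0 := log_neg hlog2 (by linarith [log_two_lt_d9])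
  linarith

/-- Lower bound: if for every n ≥ 2 there is an ID-based algorithm with
f(n)-bit registers that, on the n-ring with any injective ID assignment from
[1, n^c], solves some non-homogeneous problem under the synchronous scheduler
from every initial configuration (every execution eventually stays legal, and
no legal configuration is constant), then f(n) ≥ K · log log n for some
constant K > 0 and infinitely many n. -/
theorem space_lower_bound (c : ℝ) (hc : 1 < c) (f : ℕ → ℕ)
    (hsolve : ∀ n : ℕ, 2 ≤ n →
      ∃ A : Fin ⌈(n : ℝ) ^ c⌉₊ →
          ((Fin (f n) → Bool) × (Fin (f n) → Bool) × (Fin (f n) → Bool)) →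
          (Fin (f n) → Bool),
      ∃ legal : Set (ZMod n → (Fin (f n) → Bool)),
        (∀ γ ∈ legal, ¬ ∃ s, ∀ k, γ k = s) ∧
        ∀ id : ZMod n → Fin ⌈(n : ℝ) ^ c⌉₊, Function.Injective id →
          ∀ γ₀ : ZMod n → (Fin (f n) → Bool),
            ∃ T : ℕ, ∀ t, T ≤ t →
              (fun γ k => A (id k) (γ k, γ (k - 1), γ (k + 1)))^[t] γ₀ ∈ legal) :
    ∃ K : ℝ, 0 < K ∧ ∀ N : ℕ, ∃ n : ℕ, N ≤ n ∧
      (f n : ℝ) ≥ K * Real.log (Real.log n) := by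
  have hloglog : ∀ n : ℕ, 2 ≤ n → log (c - 1) + log (log n) ≤ (4 * f n : ℕ) * log 2 := by
    intro n hn
    obtain ⟨A, legal, hlegal, hsolves⟩ := hsolve n hn
    have : NeZero n := ⟨by omega⟩
    have hcard := card_le_of_solves_nonhomogeneous A legal hlegal hsolves
    simp only [Fintype.card_fin, Fintype.card_fun, Fintype.card_bool] at hcard
    refine log_add_log_log_le_of_rpow_le (by exact_mod_cast hn) (sub_pos.2 hc) ?_
    exact_mod_cast rpow_sub_one_le_of_ceil_rpow_le (by omega)
      (hcard.trans (Nat.mul_le_mul_right _ (two_pow_pow_two_pow_pow_le (f n))))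
  have htend : Tendsto (fun n : ℕ => log (log n)) atTop atTop :=
    tendsto_log_atTop.comp (tendsto_log_atTop.comp tendsto_natCast_atTop_atTop)
  have hlog2 : 0 < log 2 := log_pos one_lt_two
  refine ⟨1 / (8 * log 2), by positivity, fun N => ?_⟩
  -- beyond this threshold `log (c - 1)` costs at most half of `log (log n)`
  obtain ⟨n, hlarge, hn⟩ := ((htend.eventually_ge_atTop (-2 * log (c - 1))).and
    (eventually_ge_atTop (max N 2))).exists
  have hbound := hloglog n (le_of_max_le_right hn)
  push_cast at hbound
  refine ⟨n, le_of_max_le_left hn, ?_⟩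
  rw [ge_iff_le, one_div_mul_eq_div, div_le_iff₀ (by positivity)]
  linarith
end
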